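/- arXiv:1912.00525 — 6 statements merged into one kernel-verified Lean document; each statement's English description precedes it below -/
import Mathlib

section
/- For all integers N, M and all ℓ ≥ 1, the quantity A_ℓ(N,M) := (1/ℓ) ∑_{j=0}^{ℓ-1} (-1)^j (N-j)_ℓ (M-j)_ℓ / (j! (ℓ-1-j)!) equals ∑_{a,b ≥ 0, a+b ≤ ℓ-1} ℓ!(ℓ-1)! (N-a)_{a+1} (M-b)_{b+1} / ((a+1)!(b+1)! a! b! (ℓ-1-a-b)!). -/
open Finset

/-- Rising factorial (Pochhammer symbol) `(x)_n = x(x+1)⋯(x+n-1)`. -/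
noncomputable def poch (x : ℝ) (n : ℕ) : ℝ := (ascPochhammer ℝ n).eval x

lemma poch_zero (x : ℝ) : poch x 0 = 1 := by simp [poch]

lemma poch_succ_right (x : ℝ) (n : ℕ) : poch x (n+1) = poch x n * (x + n) := by
  simp [poch, ascPochhammer_succ_eval]

lemma poch_succ_left (x : ℝ) (n : ℕ) : poch x (n+1) = x * poch (x+1) n := by
  simp [poch, ascPochhammer_succ_left, Polynomial.eval_comp]

lemma poch_diff (x : ℝ) (s : ℕ) : poch x s - poch (x-1) s = s * poch x (s-1) := by
  cases s with
  | zero => simp [poch_zero]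
  | succ n =>
    have h1 : poch (x-1) (n+1) = (x-1) * poch x n := by
      rw [poch_succ_left]; ring_nf
    rw [poch_succ_right, h1]
    push_cast
    ring


lemma keyci (m i : ℕ) (h : i ≤ m) :
    ((((m+1).choose (i+1) : ℕ):ℝ) * (((m+2).descFactorial (m-i) : ℕ):ℝ))
      = ((m.choose i : ℝ) * ((m+1).descFactorial (m-i) : ℝ))
        + ((m.choose (i+1) : ℝ) * (((m+1).descFactorial (m-(i+1)) : ℝ) * ((i:ℝ)+1+((m:ℝ)+2)))) := by
  rcases eq_or_lt_of_le h with rfl | hlt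
  · simp [Nat.choose_succ_self]
  · obtain ⟨e, rfl⟩ : ∃ e, m = i + e + 1 := ⟨m - i - 1, by omega⟩
    have h1 : i + e + 1 - i = e + 1 := by omega
    have h2 : i + e + 1 - (i+1) = e := by omega
    rw [h1, h2]
    have h3 : (i+e+1+2).descFactorial (e+1) = (i+e+1+2) * (i+e+1+1).descFactorial e :=
      Nat.succ_descFactorial_succ _ _
    have h4 : (i+e+1+1).descFactorial (e+1) = (i+e+1+1-e) * (i+e+1+1).descFactorial e :=
      Nat.descFactorial_succ _ _
    have h5 : i+e+1+1-e = i+2 := by omega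
    rw [h3, h4, h5, Nat.choose_succ_succ]
    have hc : (i+e+1).choose (i+1) * (i+1) = (i+e+1).choose i * ((i+e+1) - i) :=
      Nat.choose_succ_right_eq _ _
    rw [h1] at hc
    have hc' : ((i+e+1).choose (i+1) : ℝ) * ((i:ℝ)+1) = ((i+e+1).choose i : ℝ) * ((e:ℝ)+1) := by
      exact_mod_cast congrArg (Nat.cast : ℕ → ℝ) hc
    push_cast
    linear_combination (-((((i+e+1+1).descFactorial e : ℕ):ℝ))) * hc'

lemma key (m : ℕ) : ∀ N : ℝ,
    poch N (m+1) = ∑ a ∈ range (m+1),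
      ((m.choose a : ℝ) * ((m+1).descFactorial (m-a) : ℝ)) * poch (N-a) (a+1) := by
  induction m with
  | zero => intro N; simp
  | succ m ih =>
    intro N
    have step : poch N (m+2)
        = (∑ a ∈ range (m+1), ((m.choose a : ℝ) * ((m+1).descFactorial (m-a) : ℝ)) *
            poch (N-(a+1)) (a+2))
          + ∑ a ∈ range (m+1), ((m.choose a : ℝ) * (((m+1).descFactorial (m-a) : ℝ) *
              ((a:ℝ)+((m:ℝ)+2)))) * poch (N-a) (a+1) := by
      have h0 : poch N (m+2) = poch N (m+1) * (N + ((m:ℝ)+1)) := by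
        rw [poch_succ_right]; push_cast; ring
      rw [h0, ih N, Finset.sum_mul, ← Finset.sum_add_distrib]
      refine Finset.sum_congr rfl (fun a _ => ?_)
      have hsl : poch (N-((a:ℝ)+1)) (a+2) = (N-((a:ℝ)+1)) * poch (N-a) (a+1) := by
        have harg : N - ((a:ℝ)+1) + 1 = N - a := by ring
        rw [poch_succ_left, harg]
      rw [hsl]; push_cast; ring
    rw [step]
    -- now transform the RHS (target)
    rw [Finset.sum_range_succ' (fun a => ((((m+1).choose a : ℕ) : ℝ) *
        (((m+2).descFactorial (m+1-a) : ℕ) : ℝ)) * poch (N-a) (a+1)) (m+1)]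
    have hper : ∀ i ∈ range (m+1),
        ((((m+1).choose (i+1) : ℕ) : ℝ) * (((m+2).descFactorial (m+1-(i+1)) : ℕ) : ℝ)) *
            poch (N-((i+1):ℕ)) (i+1+1)
        = ((m.choose i : ℝ) * ((m+1).descFactorial (m-i) : ℝ)) * poch (N-((i:ℝ)+1)) (i+2)
          + ((m.choose (i+1) : ℝ) * (((m+1).descFactorial (m-(i+1)) : ℝ) *
              (((i:ℝ)+1)+((m:ℝ)+2)))) * poch (N-((i+1):ℕ)) (i+1+1) := by
      intro i hi
      have hsub : m + 1 - (i+1) = m - i := by omega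
      rw [hsub, keyci m i (by simpa using Nat.lt_succ_iff.mp (mem_range.mp hi))]
      push_cast
      ring
    rw [Finset.sum_congr rfl hper, Finset.sum_add_distrib]
    have hc0 : ((((m+1).choose 0 : ℕ):ℝ) * (((m+2).descFactorial (m+1-0) : ℕ) : ℝ)) *
          poch (N-((0:ℕ):ℝ)) (0+1)
        = ((m.choose 0 : ℝ) * (((m+1).descFactorial (m-0) : ℝ) * (((0:ℕ):ℝ)+((m:ℝ)+2)))) *
          poch (N-((0:ℕ):ℝ)) (0+1) := by
      have hh : (m+2).descFactorial (m+1) = (m+2) * (m+1).descFactorial m :=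
        Nat.succ_descFactorial_succ _ _
      simp only [Nat.sub_zero, Nat.choose_zero_right, hh]
      push_cast; ring
    rw [hc0]
    rw [add_assoc]
    congr 1
    set g : ℕ → ℝ := fun a => ((m.choose a : ℝ) *
        (((m+1).descFactorial (m-a) : ℝ) * ((a:ℝ)+((m:ℝ)+2)))) * poch (N-(a:ℝ)) (a+1) with hg
    trans (∑ a ∈ range (m+2), g a)
    · rw [Finset.sum_range_succ g (m+1)]
      have hz : g (m+1) = 0 := by simp [hg, Nat.choose_succ_self]
      rw [hz, add_zero]
    · rw [Finset.sum_range_succ' g (m+1)]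
      congr 1
      exact Finset.sum_congr rfl (fun x _ => by simp only [hg]; push_cast; ring)

lemma lci (n m1 m2 i : ℕ) (hi : i ≤ n) :
    (n+1).choose (i+1) * (m1.descFactorial (i+1) * m2.descFactorial (n-i))
      = n.choose i * (m1.descFactorial i * m2.descFactorial (n-i)) * (m1-i)
        + n.choose (i+1) * (m1.descFactorial (i+1) * m2.descFactorial (n-(i+1))) * (m2-(n-(i+1))) := by
  rcases eq_or_lt_of_le hi with rfl | hlt
  · simp [Nat.choose_succ_self, Nat.descFactorial_succ]
    ring
  · obtain ⟨e, rfl⟩ : ∃ e, n = i + e + 1 := ⟨n-i-1, by omega⟩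
    have g1 : i+e+1-i = e+1 := by omega
    have g2 : i+e+1-(i+1) = e := by omega
    rw [g1, g2, Nat.choose_succ_succ, Nat.descFactorial_succ m2 e, Nat.descFactorial_succ m1 i]
    ring

lemma lemL (n : ℕ) : ∀ (m1 m2 : ℕ), n ≤ m1 → n ≤ m2 → ∀ N M : ℝ,
    ∑ j ∈ range (n+1), (-1:ℝ)^j * (n.choose j : ℝ) * (poch (N-j) m1 * poch (M-j) m2)
    = ∑ k ∈ range (n+1), ((n.choose k : ℝ) * ((m1.descFactorial k : ℝ) * (m2.descFactorial (n-k) : ℝ)))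
        * (poch N (m1-k) * poch (M-k) (m2-(n-k))) := by
  induction n with
  | zero => intro m1 m2 _ _ N M; simp
  | succ n ih =>
    intro m1 m2 h1 h2 N M
    have hn1 : n ≤ m1 := by omega
    have hn2 : n ≤ m2 := by omega
    -- Step 1: split LHS
    have hsplit :
        ∑ j ∈ range (n+2), (-1:ℝ)^j * ((n+1).choose j : ℝ) * (poch (N-j) m1 * poch (M-j) m2)
        = (∑ j ∈ range (n+1), (-1:ℝ)^j * (n.choose j : ℝ) * (poch (N-j) m1 * poch (M-j) m2))
          - ∑ i ∈ range (n+1), (-1:ℝ)^i * (n.choose i : ℝ)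
              * (poch ((N-1)-i) m1 * poch ((M-1)-i) m2) := by
      rw [Finset.sum_range_succ' (fun j => (-1:ℝ)^j * ((n+1).choose j : ℝ) *
          (poch (N-j) m1 * poch (M-j) m2)) (n+1)]
      have hper : ∀ i ∈ range (n+1),
          (-1:ℝ)^(i+1) * ((n+1).choose (i+1) : ℝ) * (poch (N-((i+1):ℕ)) m1 * poch (M-((i+1):ℕ)) m2)
          = (-1:ℝ)^(i+1) * (n.choose (i+1) : ℝ) * (poch (N-((i+1):ℕ)) m1 * poch (M-((i+1):ℕ)) m2)
            - (-1:ℝ)^i * (n.choose i : ℝ) * (poch ((N-1)-i) m1 * poch ((M-1)-i) m2) := by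
        intro i _
        have e1 : N - ((i+1:ℕ):ℝ) = (N-1) - i := by push_cast; ring
        have e2 : M - ((i+1:ℕ):ℝ) = (M-1) - i := by push_cast; ring
        rw [Nat.choose_succ_succ, e1, e2]
        push_cast
        ring
      rw [Finset.sum_congr rfl hper, Finset.sum_sub_distrib]
      have hfold : (∑ i ∈ range (n+1), (-1:ℝ)^(i+1) * (n.choose (i+1) : ℝ)
            * (poch (N-((i+1):ℕ)) m1 * poch (M-((i+1):ℕ)) m2))
          + (-1:ℝ)^0 * ((n+1).choose 0 : ℝ) * (poch (N-((0:ℕ):ℝ)) m1 * poch (M-((0:ℕ):ℝ)) m2)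
          = ∑ j ∈ range (n+1), (-1:ℝ)^j * (n.choose j : ℝ) * (poch (N-j) m1 * poch (M-j) m2) := by
        have : ((n+1).choose 0 : ℝ) = (n.choose 0 : ℝ) := by simp
        rw [this,
          ← Finset.sum_range_succ' (fun j => (-1:ℝ)^j * (n.choose j : ℝ) *
            (poch (N-j) m1 * poch (M-j) m2)) (n+1),
          Finset.sum_range_succ]
        simp [Nat.choose_succ_self]
      rw [sub_eq_add_neg, ← hfold]
      push_cast
      ring
    rw [hsplit, ih m1 m2 hn1 hn2 N M, ih m1 m2 hn1 hn2 (N-1) (M-1)]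
    -- Step 2: algebraic recombination
    have hdiff : ∀ k ∈ range (n+1),
        ((n.choose k : ℝ) * ((m1.descFactorial k : ℝ) * (m2.descFactorial (n-k) : ℝ)))
            * (poch N (m1-k) * poch (M-k) (m2-(n-k)))
          - ((n.choose k : ℝ) * ((m1.descFactorial k : ℝ) * (m2.descFactorial (n-k) : ℝ)))
            * (poch (N-1) (m1-k) * poch ((M-1)-k) (m2-(n-k)))
        = ((n.choose k : ℝ) * ((m1.descFactorial k : ℝ) * (m2.descFactorial (n-k) : ℝ)))
            * (((m1-k : ℕ) : ℝ) * poch N (m1-k-1) * poch ((M-1)-k) (m2-(n-k)))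
          + ((n.choose k : ℝ) * ((m1.descFactorial k : ℝ) * (m2.descFactorial (n-k) : ℝ)))
            * (((m2-(n-k) : ℕ) : ℝ) * poch N (m1-k) * poch (M-k) (m2-(n-k)-1)) := by
      intro k _
      have dA : poch N (m1-k) - poch (N-1) (m1-k) = ((m1-k : ℕ):ℝ) * poch N (m1-k-1) :=
        poch_diff N (m1-k)
      have e2 : (M-1) - (k:ℝ) = (M - k) - 1 := by ring
      have dB : poch (M-k) (m2-(n-k)) - poch ((M-1)-k) (m2-(n-k))
          = ((m2-(n-k) : ℕ):ℝ) * poch (M-k) (m2-(n-k)-1) := by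
        rw [e2]; exact poch_diff (M-(k:ℝ)) (m2-(n-k))
      have expand : poch N (m1-k) * poch (M-k) (m2-(n-k))
            - poch (N-1) (m1-k) * poch ((M-1)-k) (m2-(n-k))
          = (poch N (m1-k) - poch (N-1) (m1-k)) * poch ((M-1)-k) (m2-(n-k))
            + poch N (m1-k) * (poch (M-k) (m2-(n-k)) - poch ((M-1)-k) (m2-(n-k))) := by ring
      rw [← mul_sub, expand, dA, dB]
      ring
    rw [← Finset.sum_sub_distrib, Finset.sum_congr rfl hdiff, Finset.sum_add_distrib]
    -- Step 3: transform target (currently on... ) : goal is Σ1 + Σ2 = T(n+1)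
    rw [Finset.sum_range_succ' (fun k => (((n+1).choose k : ℝ) *
        ((m1.descFactorial k : ℝ) * (m2.descFactorial (n+1-k) : ℝ)))
        * (poch N (m1-k) * poch (M-k) (m2-(n+1-k)))) (n+1)]
    have hper2 : ∀ i ∈ range (n+1),
        (((n+1).choose (i+1) : ℝ) * ((m1.descFactorial (i+1) : ℝ) * (m2.descFactorial (n+1-(i+1)) : ℝ)))
          * (poch N (m1-(i+1)) * poch (M-((i+1):ℕ)) (m2-(n+1-(i+1))))
        = ((n.choose i : ℝ) * ((m1.descFactorial i : ℝ) * (m2.descFactorial (n-i) : ℝ)))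
            * (((m1-i : ℕ) : ℝ) * poch N (m1-i-1) * poch ((M-1)-i) (m2-(n-i)))
          + ((n.choose (i+1) : ℝ) * ((m1.descFactorial (i+1) : ℝ) * (m2.descFactorial (n-(i+1)) : ℝ)))
            * (((m2-(n-(i+1)) : ℕ) : ℝ) * poch N (m1-(i+1)) * poch (M-((i+1):ℕ)) (m2-(n-(i+1))-1)) := by
      intro i hi
      have hile : i ≤ n := Nat.lt_succ_iff.mp (mem_range.mp hi)
      have g0 : n+1-(i+1) = n-i := by omega
      have g1 : m1-(i+1) = m1-i-1 := by omega
      have g4 : M - ((i+1:ℕ):ℝ) = (M-1) - i := by push_cast; ring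
      rcases eq_or_lt_of_le hile with rfl | hlt
      · have z1 : i - i = 0 := by omega
        have z2 : i - (i+1) = 0 := by omega
        have z3 : m1.descFactorial (i+1) = (m1 - i) * m1.descFactorial i :=
          Nat.descFactorial_succ _ _
        rw [g0, g1, g4, z1, z2, z3, Nat.choose_self, Nat.choose_succ_self]
        simp [Nat.choose_self]
        push_cast
        ring
      · have g3 : m2-(n-(i+1))-1 = m2-(n-i) := by omega
        have hci := lci n m1 m2 i hile
        have hci' : (((n+1).choose (i+1) : ℕ):ℝ) * ((m1.descFactorial (i+1) : ℝ) * (m2.descFactorial (n-i) : ℝ))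
            = ((n.choose i : ℕ):ℝ) * ((m1.descFactorial i : ℝ) * (m2.descFactorial (n-i) : ℝ)) * ((m1-i : ℕ):ℝ)
              + ((n.choose (i+1) : ℕ):ℝ) * ((m1.descFactorial (i+1) : ℝ) * (m2.descFactorial (n-(i+1)) : ℝ)) * ((m2-(n-(i+1)) : ℕ):ℝ) := by
          exact_mod_cast congrArg (Nat.cast : ℕ → ℝ) hci
        rw [g0, g1, g3, g4, hci']
        ring
    rw [Finset.sum_congr rfl hper2, Finset.sum_add_distrib]
    have hc0' : (((n+1).choose 0 : ℝ) * ((m1.descFactorial 0 : ℝ) * (m2.descFactorial (n+1-0) : ℝ)))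
          * (poch N (m1-0) * poch (M-((0:ℕ):ℝ)) (m2-(n+1-0)))
        = ((n.choose 0 : ℝ) * ((m1.descFactorial 0 : ℝ) * (m2.descFactorial (n-0) : ℝ)))
            * (((m2-(n-0) : ℕ) : ℝ) * poch N (m1-0) * poch (M-((0:ℕ):ℝ)) (m2-(n-0)-1)) := by
      have hh : m2.descFactorial (n+1) = (m2-n) * m2.descFactorial n := Nat.descFactorial_succ _ _
      have g5 : m2-(n+1) = m2-n-1 := by omega
      simp only [Nat.sub_zero, Nat.choose_zero_right, hh, g5]
      push_cast
      ring
    rw [hc0']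
    rw [add_assoc]
    congr 1
    set g : ℕ → ℝ := fun k => ((n.choose k : ℝ) * ((m1.descFactorial k : ℝ) * (m2.descFactorial (n-k) : ℝ)))
          * (((m2-(n-k) : ℕ) : ℝ) * poch N (m1-k) * poch (M-k) (m2-(n-k)-1)) with hg
    trans (∑ k ∈ range (n+2), g k)
    · rw [Finset.sum_range_succ g (n+1)]
      have hz : g (n+1) = 0 := by simp [hg, Nat.choose_succ_self]
      rw [hz, add_zero]
    · rw [Finset.sum_range_succ' g (n+1)]

lemma tri (n : ℕ) (f : ℕ → ℕ → ℝ) :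
    ∑ a ∈ range n, ∑ b ∈ range (n-a), f a b = ∑ b ∈ range n, ∑ a ∈ range (n-b), f a b := by
  rw [Finset.sum_sigma', Finset.sum_sigma']
  refine Finset.sum_nbij' (fun p => ⟨p.2, p.1⟩) (fun p => ⟨p.2, p.1⟩) ?_ ?_ ?_ ?_ ?_ <;>
    simp only [Finset.mem_sigma, Finset.mem_range] <;> intros <;> first | omega | rfl | trivial

lemma cast_descFactorial (m k : ℕ) (h : k ≤ m) :
    (m.descFactorial k : ℝ) = (m.factorial : ℝ) / ((m-k).factorial : ℝ) := by
  have hne : (((m-k).factorial : ℕ) : ℝ) ≠ 0 := Nat.cast_ne_zero.mpr (Nat.factorial_ne_zero _)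
  rw [eq_div_iff hne]
  exact_mod_cast congrArg (Nat.cast : ℕ → ℝ) ((Nat.factorial_mul_descFactorial h).symm ▸
    (mul_comm (m.descFactorial k) ((m-k).factorial)))

theorem A_ell_integral_form (N M : ℝ) (ℓ : ℕ) (hℓ : 1 ≤ ℓ) :
    (1 / (ℓ : ℝ)) * ∑ j ∈ range ℓ,
        (-1 : ℝ) ^ j * poch (N - j) ℓ * poch (M - j) ℓ /
          ((j.factorial : ℝ) * ((ℓ - 1 - j).factorial : ℝ))
    = ∑ a ∈ range ℓ, ∑ b ∈ range (ℓ - a),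
        ((ℓ.factorial : ℝ) * ((ℓ - 1).factorial : ℝ)) *
          poch (N - a) (a + 1) * poch (M - b) (b + 1) /
          (((a + 1).factorial : ℝ) * ((b + 1).factorial : ℝ) *
            (a.factorial : ℝ) * (b.factorial : ℝ) * ((ℓ - 1 - a - b).factorial : ℝ)) := by
  obtain ⟨n, rfl⟩ : ∃ n, ℓ = n+1 := ⟨ℓ-1, by omega⟩
  have fne : ∀ x : ℕ, (x.factorial : ℝ) ≠ 0 := fun x => Nat.cast_ne_zero.mpr (Nat.factorial_ne_zero x)
  have step1 : (1/((n+1:ℕ):ℝ)) * ∑ j ∈ range (n+1),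
        (-1:ℝ)^j * poch (N-j) (n+1) * poch (M-j) (n+1) /
          ((j.factorial:ℝ) * ((n+1-1-j).factorial : ℝ))
      = (1/(((n+1).factorial):ℝ)) * ∑ j ∈ range (n+1),
          (-1:ℝ)^j * (n.choose j : ℝ) * (poch (N-j) (n+1) * poch (M-j) (n+1)) := by
    rw [Finset.mul_sum, Finset.mul_sum]
    refine Finset.sum_congr rfl fun j hj => ?_
    have hjn : j ≤ n := Nat.lt_succ_iff.mp (mem_range.mp hj)
    have hch : (n.choose j : ℝ) = (n.factorial : ℝ) / ((j.factorial : ℝ) * ((n-j).factorial : ℝ)) :=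
      Nat.cast_choose ℝ hjn
    have hsub : n+1-1-j = n-j := by omega
    have h1 : ((n+1).factorial : ℝ) = ((n:ℝ)+1) * (n.factorial : ℝ) := by
      exact_mod_cast congrArg (Nat.cast : ℕ → ℝ) (Nat.factorial_succ n)
    rw [hsub, hch, h1]
    push_cast
    field_simp
  rw [step1, lemL n (n+1) (n+1) (by omega) (by omega) N M]
  have step3 : (1/(((n+1).factorial):ℝ)) * ∑ k ∈ range (n+1),
        ((n.choose k : ℝ) * (((n+1).descFactorial k : ℝ) * ((n+1).descFactorial (n-k) : ℝ)))
          * (poch N (n+1-k) * poch (M-k) (n+1-(n-k)))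
      = ∑ k ∈ range (n+1), ∑ a ∈ range (n+1-k),
          ((1/(((n+1).factorial):ℝ)) * ((n.choose k : ℝ) *
            (((n+1).descFactorial k : ℝ) * ((n+1).descFactorial (n-k) : ℝ))) *
            (((n-k).choose a : ℝ) * (((n-k+1).descFactorial (n-k-a) : ℝ))))
          * (poch (N-a) (a+1) * poch (M-k) (k+1)) := by
    rw [Finset.mul_sum]
    refine Finset.sum_congr rfl fun k hk => ?_
    have hkn : k ≤ n := Nat.lt_succ_iff.mp (mem_range.mp hk)
    have e1 : n+1-(n-k) = k+1 := by omega
    have e2 : n+1-k = (n-k)+1 := by omega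
    rw [e1, e2, key (n-k) N, Finset.sum_mul, Finset.mul_sum, Finset.mul_sum]
    refine Finset.sum_congr rfl fun a _ => ?_
    ring
  rw [step3, tri (n+1) (fun k a =>
      ((1/(((n+1).factorial):ℝ)) * ((n.choose k : ℝ) *
        (((n+1).descFactorial k : ℝ) * ((n+1).descFactorial (n-k) : ℝ))) *
        (((n-k).choose a : ℝ) * (((n-k+1).descFactorial (n-k-a) : ℝ))))
      * (poch (N-a) (a+1) * poch (M-k) (k+1)))]
  refine Finset.sum_congr rfl fun a ha => Finset.sum_congr rfl fun b hb => ?_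
  have han : a ≤ n := Nat.lt_succ_iff.mp (mem_range.mp ha)
  have hbn : a + b ≤ n := by
    have := mem_range.mp hb; omega
  -- coefficient identity
  have d1 : ((n+1).descFactorial b : ℝ) = ((n+1).factorial : ℝ) / ((n+1-b).factorial : ℝ) :=
    cast_descFactorial _ _ (by omega)
  have d2 : ((n+1).descFactorial (n-b) : ℝ) = ((n+1).factorial : ℝ) / ((b+1).factorial : ℝ) := by
    rw [cast_descFactorial _ _ (by omega), show n+1-(n-b) = b+1 by omega]
  have d3 : ((n-b+1).descFactorial (n-b-a) : ℝ) = ((n-b+1).factorial : ℝ) / ((a+1).factorial : ℝ) := by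
    rw [cast_descFactorial _ _ (by omega), show n-b+1-(n-b-a) = a+1 by omega]
  have c1 : (n.choose b : ℝ) = (n.factorial : ℝ) / ((b.factorial : ℝ) * ((n-b).factorial : ℝ)) :=
    Nat.cast_choose ℝ (by omega)
  have c2 : ((n-b).choose a : ℝ) = ((n-b).factorial : ℝ) / ((a.factorial : ℝ) * ((n-b-a).factorial : ℝ)) :=
    Nat.cast_choose ℝ (by omega)
  have e4 : n+1-1-a-b = n-a-b := by omega
  have e5 : n-b-a = n-a-b := by omega
  have e6 : ((n+1-b).factorial : ℝ) = ((n-b+1).factorial : ℝ) := by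
    rw [show n+1-b = n-b+1 by omega]
  rw [d1, d2, d3, c1, c2, e4, e5, e6]
  have h1 : ((n+1).factorial : ℝ) = ((n:ℝ)+1) * (n.factorial : ℝ) := by
    exact_mod_cast congrArg (Nat.cast : ℕ → ℝ) (Nat.factorial_succ n)
  have h2 : ((n-b+1).factorial : ℝ) = (((n-b:ℕ):ℝ)+1) * ((n-b).factorial : ℝ) := by
    exact_mod_cast congrArg (Nat.cast : ℕ → ℝ) (Nat.factorial_succ (n-b))
  have hsimp : n+1-1 = n := by omega
  rw [hsimp]
  field_simp
end

section
/- For integers a, b ≥ 0 with a + b ≤ ℓ - 2 (ℓ ≥ 2), the rational number ℓ!(ℓ-1)! / ((a+1)!(b+1)! a! b! (ℓ-1-a-b)!) is a positive integer. -/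
theorem coeff_is_positive_integer (ℓ a b : ℕ) (hℓ : 2 ≤ ℓ) (hab : a + b ≤ ℓ - 2) :
    ∃ k : ℕ, 0 < k ∧
      ((ℓ.factorial : ℚ) * ((ℓ - 1).factorial : ℚ)) /
        (((a + 1).factorial : ℚ) * ((b + 1).factorial : ℚ) * (a.factorial : ℚ) *
          (b.factorial : ℚ) * (((ℓ - 1 - a - b).factorial : ℚ))) = (k : ℚ) := by
  have hab2 : a + b + 2 ≤ ℓ := by omega
  set N := ℓ.factorial * (ℓ - 1).factorial with hN
  set D := (a + 1).factorial * (b + 1).factorial * a.factorial * b.factorial *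
      (ℓ - 1 - a - b).factorial with hD
  have h1 : (a + 1).factorial * (b + 1).factorial ∣ ℓ.factorial := by
    have hle : b + 1 ≤ ℓ - (a + 1) := by omega
    have := Nat.factorial_mul_factorial_dvd_factorial (show a + 1 ≤ ℓ by omega)
    exact dvd_trans (mul_dvd_mul_left _ (Nat.factorial_dvd_factorial hle)) this
  have h2 : a.factorial * b.factorial * (ℓ - 1 - a - b).factorial ∣ (ℓ - 1).factorial := by
    have ha : a.factorial * ((ℓ - 1 - b) - a).factorial ∣ (ℓ - 1 - b).factorial :=
      Nat.factorial_mul_factorial_dvd_factorial (show a ≤ ℓ - 1 - b by omega)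
    have hb : b.factorial * ((ℓ - 1) - b).factorial ∣ (ℓ - 1).factorial :=
      Nat.factorial_mul_factorial_dvd_factorial (show b ≤ ℓ - 1 by omega)
    have heq : ℓ - 1 - a - b = ℓ - 1 - b - a := by omega
    calc a.factorial * b.factorial * (ℓ - 1 - a - b).factorial
        = b.factorial * (a.factorial * (ℓ - 1 - b - a).factorial) := by rw [heq]; ring
      _ ∣ b.factorial * (ℓ - 1 - b).factorial := mul_dvd_mul_left _ ha
      _ ∣ (ℓ - 1).factorial := hb
  have hdvd : D ∣ N := by
    have := mul_dvd_mul h1 h2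
    have hre : D = (a + 1).factorial * (b + 1).factorial *
        (a.factorial * b.factorial * (ℓ - 1 - a - b).factorial) := by rw [hD]; ring
    rw [hre, hN]; exact this
  have hDpos : 0 < D := by
    rw [hD]; positivity
  have hNpos : 0 < N := by rw [hN]; positivity
  refine ⟨N / D, Nat.div_pos (Nat.le_of_dvd hNpos hdvd) hDpos, ?_⟩
  have : ((N / D : ℕ) : ℚ) = (N : ℚ) / (D : ℚ) := by
    rw [Nat.cast_div hdvd (by exact_mod_cast hDpos.ne')]
  rw [this, hN, hD]
  push_cast
  ring
end

section
/- The coefficients B_ℓ(N,M) satisfy the three-term recursion (ℓ+1) B_{ℓ+1}(N,M) = (2ℓ+1)(N+M-1) B_ℓ(N,M) + ℓ(ℓ² - (M-N)²) B_{ℓ-1}(N,M) for all ℓ ≥ 1, with initial data B_0(N,M) = 1 and B_1(N,M) = N+M-1. -/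
open Finset

/-- `B_ℓ(N,M) = ∑_{j=0}^{ℓ} (-1)^j (N-j)_ℓ (M-j)_ℓ / (j! (ℓ-j)!)`. -/
noncomputable def B (N M : ℝ) (ℓ : ℕ) : ℝ :=
  ∑ j ∈ range (ℓ + 1),
    (-1 : ℝ) ^ j * poch (N - j) ℓ * poch (M - j) ℓ /
      ((j.factorial : ℝ) * ((ℓ - j).factorial : ℝ))

lemma poch_succ (x : ℝ) (n : ℕ) : poch x (n + 1) = poch x n * (x + n) := by
  simp [poch, ascPochhammer_succ_right]

lemma poch_sub_one (x : ℝ) (n : ℕ) : poch (x - 1) (n + 1) = (x - 1) * poch x n := by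
  simp [poch, ascPochhammer_succ_left, Polynomial.eval_comp]

lemma poch_one (x : ℝ) : poch x 1 = x := by simp [poch]

/-- factorial-cleared form of `B`. -/
lemma B_mul_factorial (N M : ℝ) (m k : ℕ) (hk : m + 1 ≤ k) :
    (m.factorial : ℝ) * B N M m
      = ∑ j ∈ range k,
          (-1 : ℝ) ^ j * (m.choose j : ℝ) * poch (N - j) m * poch (M - j) m := by
  rw [B, Finset.mul_sum]
  rw [← Finset.sum_range_add_sum_Ico _ hk]
  have h2 : ∀ j ∈ Finset.Ico (m+1) k,
      (-1 : ℝ) ^ j * (m.choose j : ℝ) * poch (N - j) m * poch (M - j) m = 0 := by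
    intro j hj
    have : m.choose j = 0 := Nat.choose_eq_zero_of_lt (Finset.mem_Ico.mp hj).1
    simp [this]
  rw [Finset.sum_eq_zero h2, add_zero]
  apply Finset.sum_congr rfl
  intro j hj
  have hjm : j ≤ m := Nat.lt_succ_iff.mp (Finset.mem_range.mp hj)
  have hfac : (j.factorial : ℝ) * ((m - j).factorial : ℝ) ≠ 0 := by
    positivity
  have hch : (m.choose j : ℝ) * ((j.factorial : ℝ) * ((m - j).factorial : ℝ))
      = (m.factorial : ℝ) := by
    rw [← Nat.cast_mul, ← Nat.cast_mul, ← mul_assoc,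
      Nat.choose_mul_factorial_mul_factorial hjm]
  rw [mul_div_assoc', div_eq_iff hfac]
  linear_combination (-(poch (N - ↑j) m * poch (M - ↑j) m * (-1:ℝ)^j)) * hch

theorem B_three_term_recursion (N M : ℝ) :
    B N M 0 = 1 ∧ B N M 1 = N + M - 1 ∧
    ∀ ℓ : ℕ, 1 ≤ ℓ →
      ((ℓ : ℝ) + 1) * B N M (ℓ + 1)
        = (2 * (ℓ : ℝ) + 1) * (N + M - 1) * B N M ℓ
          + (ℓ : ℝ) * ((ℓ : ℝ) ^ 2 - (M - N) ^ 2) * B N M (ℓ - 1) := by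
  refine ⟨?_, ?_, ?_⟩
  · simp [B, poch_zero]
  · rw [B]
    rw [Finset.sum_range_succ, Finset.sum_range_one]
    simp [poch_one, Nat.factorial]
    ring
  · intro ℓ hℓ
    obtain ⟨k, rfl⟩ : ∃ k, ℓ = k + 1 := ⟨ℓ - 1, (Nat.succ_pred_eq_of_pos hℓ).symm⟩
    clear hℓ
    set K : ℝ := (k : ℝ) with hK
    -- the three cleared sums
    have hB1 := B_mul_factorial N M (k + 2) (k + 3) (by omega)
    have hB0 := B_mul_factorial N M (k + 1) (k + 3) (by omega)
    have hBm := B_mul_factorial N M k (k + 3) (by omega)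
    -- telescoping function
    set t : ℕ → ℝ := fun j =>
      (-1 : ℝ) ^ j * (((k + 2).choose j : ℕ) : ℝ) * (j : ℝ) *
        ((j : ℝ) ^ 2 - (3 * (K + 1) + 2) * (j : ℝ)
          + (2 * (K + 1) ^ 2 + 3 * (K + 1) + N + M - N * M)) *
        poch (N - j) (k + 1) * poch (M - j) (k + 1) with ht
    have key : ∑ j ∈ range (k + 3),
        ((K + 2) * ((-1 : ℝ) ^ j * (((k + 2).choose j : ℕ) : ℝ)
            * poch (N - j) (k + 2) * poch (M - j) (k + 2))
          - ((2 * (K + 1) + 1) * (N + M - 1) * (K + 2)) * ((-1 : ℝ) ^ j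
            * (((k + 1).choose j : ℕ) : ℝ) * poch (N - j) (k + 1) * poch (M - j) (k + 1))
          - ((K + 1) ^ 2 * ((K + 1) ^ 2 - (M - N) ^ 2) * (K + 2)) * ((-1 : ℝ) ^ j
            * ((k.choose j : ℕ) : ℝ) * poch (N - j) k * poch (M - j) k))
        = 0 := by
      have hterm : ∀ j ∈ range (k + 3),
          ((K + 2) * ((-1 : ℝ) ^ j * (((k + 2).choose j : ℕ) : ℝ)
              * poch (N - j) (k + 2) * poch (M - j) (k + 2))
            - ((2 * (K + 1) + 1) * (N + M - 1) * (K + 2)) * ((-1 : ℝ) ^ j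
              * (((k + 1).choose j : ℕ) : ℝ) * poch (N - j) (k + 1) * poch (M - j) (k + 1))
            - ((K + 1) ^ 2 * ((K + 1) ^ 2 - (M - N) ^ 2) * (K + 2)) * ((-1 : ℝ) ^ j
              * ((k.choose j : ℕ) : ℝ) * poch (N - j) k * poch (M - j) k))
          = t (j + 1) - t j := by
        intro j hj
        have hjle : j ≤ k + 2 := by
          have := Finset.mem_range.mp hj; omega
        -- choose relations (as reals)
        have h1 : (((k + 2).choose j : ℕ) : ℝ) * (K + 2 - j)
            = (((k + 1).choose j : ℕ) : ℝ) * (K + 2) := by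
          have := Nat.choose_mul_succ_eq (k + 1) j
          have hc : ((((k + 1).choose j) * (k + 2) : ℕ) : ℝ)
              = (((k + 2).choose j * (k + 2 - j) : ℕ) : ℝ) := Nat.cast_inj.mpr this
          push_cast [Nat.cast_sub hjle] at hc
          linarith [hc]
        have h2 : (((k + 1).choose j : ℕ) : ℝ) * (K + 1 - j)
            = ((k.choose j : ℕ) : ℝ) * (K + 1) := by
          rcases Nat.lt_or_ge j (k + 2) with hlt | hge
          · have hle' : j ≤ k + 1 := by omega
            have := Nat.choose_mul_succ_eq k j
            have hc : (((k.choose j) * (k + 1) : ℕ) : ℝ)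
                = (((k + 1).choose j * (k + 1 - j) : ℕ) : ℝ) := Nat.cast_inj.mpr this
            push_cast [Nat.cast_sub hle'] at hc
            linarith [hc]
          · have hj1 : j = k + 2 := by omega
            subst hj1
            have z1 : (k + 1).choose (k + 2) = 0 := Nat.choose_eq_zero_of_lt (by omega)
            have z2 : k.choose (k + 2) = 0 := Nat.choose_eq_zero_of_lt (by omega)
            simp [z1, z2]
        have h3 : (((k + 2).choose (j + 1) : ℕ) : ℝ) * ((j : ℝ) + 1)
            = (((k + 1).choose j : ℕ) : ℝ) * (K + 2) := by
          have := Nat.add_one_mul_choose_eq (k + 1) j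
          have hc : (((k + 2) * ((k + 1).choose j) : ℕ) : ℝ)
              = (((k + 2).choose (j + 1) * (j + 1) : ℕ) : ℝ) := Nat.cast_inj.mpr this
          push_cast at hc
          linarith [hc]
        -- poch rewrites
        have e1 : poch (N - ((j : ℕ) + 1 : ℕ)) (k + 1) = (N - j - 1) * poch (N - j) k := by
          push_cast
          rw [show N - ((j : ℝ) + 1) = (N - j) - 1 by ring, poch_sub_one]
        have e2 : poch (M - ((j : ℕ) + 1 : ℕ)) (k + 1) = (M - j - 1) * poch (M - j) k := by
          push_cast
          rw [show M - ((j : ℝ) + 1) = (M - j) - 1 by ring, poch_sub_one]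
        rw [ht]
        simp only [e1, e2, poch_succ]
        push_cast
        -- now pure algebra
        set A := poch (N - j) k
        set B' := poch (M - j) k
        set c1 : ℝ := (((k + 2).choose j : ℕ) : ℝ)
        set c0 : ℝ := (((k + 1).choose j : ℕ) : ℝ)
        set cm : ℝ := ((k.choose j : ℕ) : ℝ)
        set c1' : ℝ := (((k + 2).choose (j + 1) : ℕ) : ℝ)
        set J : ℝ := (j : ℝ)
        have hJ1 : J + 1 ≠ 0 := by positivity
        have hK2 : K + 2 ≠ 0 := by positivity
        have hK1 : K + 1 ≠ 0 := by positivity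
        have ec1' : c1' = c0 * (K + 2) / (J + 1) := by
          field_simp
          linarith [h3]
        have ec0 : c0 = c1 * (K + 2 - J) / (K + 2) := by
          field_simp
          linarith [h1]
        have ecm : cm = c0 * (K + 1 - J) / (K + 1) := by
          field_simp
          linarith [h2]
        rw [ec1', ecm, ec0, pow_succ]
        field_simp
        ring
      rw [Finset.sum_congr rfl hterm, Finset.sum_range_sub t]
      have hz1 : t (k + 3) = 0 := by
        have : (k + 2).choose (k + 3) = 0 := Nat.choose_eq_zero_of_lt (by omega)
        simp [ht, this]
      have hz0 : t 0 = 0 := by simp [ht]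
      rw [hz1, hz0, sub_zero]
    -- combine
    have hsplit : ∑ j ∈ range (k + 3),
        ((K + 2) * ((-1 : ℝ) ^ j * (((k + 2).choose j : ℕ) : ℝ)
            * poch (N - j) (k + 2) * poch (M - j) (k + 2))
          - ((2 * (K + 1) + 1) * (N + M - 1) * (K + 2)) * ((-1 : ℝ) ^ j
            * (((k + 1).choose j : ℕ) : ℝ) * poch (N - j) (k + 1) * poch (M - j) (k + 1))
          - ((K + 1) ^ 2 * ((K + 1) ^ 2 - (M - N) ^ 2) * (K + 2)) * ((-1 : ℝ) ^ j
            * ((k.choose j : ℕ) : ℝ) * poch (N - j) k * poch (M - j) k))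
        = (K + 2) * (((k + 2).factorial : ℝ) * B N M (k + 2))
          - ((2 * (K + 1) + 1) * (N + M - 1) * (K + 2)) * (((k + 1).factorial : ℝ) * B N M (k + 1))
          - ((K + 1) ^ 2 * ((K + 1) ^ 2 - (M - N) ^ 2) * (K + 2)) * ((k.factorial : ℝ) * B N M k) := by
      rw [Finset.sum_sub_distrib, Finset.sum_sub_distrib, ← Finset.mul_sum, ← Finset.mul_sum,
        ← Finset.mul_sum, hB1, hB0, hBm]
    rw [hsplit] at key
    -- factorial facts
    have hf1 : ((k + 2).factorial : ℝ) = (K + 2) * ((k + 1).factorial : ℝ) := by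
      rw [Nat.factorial_succ]; push_cast; ring
    have hf2 : ((k + 1).factorial : ℝ) = (K + 1) * (k.factorial : ℝ) := by
      rw [Nat.factorial_succ]; push_cast; ring
    have hfne : ((k + 1).factorial : ℝ) * (K + 2) ≠ 0 := by positivity
    apply mul_left_cancel₀ hfne
    simp only [show k + 1 + 1 = k + 2 from rfl, Nat.add_sub_cancel]
    push_cast
    linear_combination key - ((K + 2) * B N M (k + 2)) * hf1
      - ((K + 2) * (K + 1) * ((K + 1) ^ 2 - (M - N) ^ 2) * B N M k) * hf2
end

section
/- In the group algebra ℂ[S_d] of the symmetric group on {1,…,d}, the Jucys–Murphy elements J_m := (1,m) + (2,m) + ⋯ + (m-1,m) for m = 2,…,d satisfy (1 + ξJ_2)(1 + ξJ_3)⋯(1 + ξJ_d) = ∑_{ν ⊢ d} ξ^{d - ℓ(ν)} C_ν, where for each partition ν of d, C_ν denotes the sum of all permutations of cycle type ν and ℓ(ν) is the number of parts of ν. -/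
open scoped Classical

/-- The `m`-th Jucys–Murphy element `J_m = ∑_{i < m} (i, m)` in the group algebra
`ℂ[S_d]` (points labelled by `Fin d`). -/
noncomputable def jucysMurphy (d : ℕ) (m : Fin d) : MonoidAlgebra ℂ (Equiv.Perm (Fin d)) :=
  ∑ i ∈ Finset.univ.filter (fun i : Fin d => i < m),
    MonoidAlgebra.of ℂ (Equiv.Perm (Fin d)) (Equiv.swap i m)

/-- The conjugacy-class sum `C_ν = ∑_{σ of cycle type ν} σ` in `ℂ[S_d]`, where the cycle type
of `σ` is the partition of `d` given by all its cycle lengths, including fixed points. -/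
noncomputable def classSum (d : ℕ) (ν : Nat.Partition d) :
    MonoidAlgebra ℂ (Equiv.Perm (Fin d)) :=
  ∑ σ ∈ Finset.univ.filter
      (fun σ : Equiv.Perm (Fin d) => (Equiv.Perm.partition σ).parts = ν.parts),
    MonoidAlgebra.of ℂ (Equiv.Perm (Fin d)) σ

/-!
Write `ℓ(σ) = ∑ (length − 1)` over the cycles of `σ`, which is `d` minus the number of cycles.
Let `W_m = ∑ ξ^{ℓ(σ)} σ` over the permutations supported in the first `m` points. Then
`W_m (1 + ξ J_{m+1}) = W_{m+1}`: a permutation `τ` supported in the first `m + 1` points that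
moves the point `m + 1` factors uniquely as `σ (i, m + 1)` with `i = τ⁻¹(m + 1)` and `σ`
supported in the first `m` points, and multiplying by `(i, m + 1)` on the right merges the fixed
point `m + 1` into the cycle of `i`, so `ℓ(τ) = ℓ(σ) + 1`. Hence the product is `W_d`, and
grouping `W_d` by cycle type gives the class sums.
-/

open Finset

theorem Multiset.sum_map_sub_one_add_card {s : Multiset ℕ} (hs : ∀ n ∈ s, 1 ≤ n) :
    (s.map (· - 1)).sum + Multiset.card s = s.sum := by
  induction s using Multiset.induction_on with
  | empty => simp
  | cons a s ih =>
    simp only [Multiset.mem_cons, forall_eq_or_imp] at hs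
    simp only [Multiset.map_cons, Multiset.sum_cons, Multiset.card_cons, ← ih hs.2]
    omega

namespace Equiv.Perm

variable {α : Type*} [DecidableEq α] [Fintype α]

-- The least number of transpositions whose product is `σ`.
def transpositionLength (σ : Perm α) : ℕ :=
  (σ.cycleType.map (· - 1)).sum

@[simp]
theorem transpositionLength_one : (1 : Perm α).transpositionLength = 0 := by
  simp [transpositionLength]

@[simp]
theorem transpositionLength_inv (σ : Perm α) :
    σ⁻¹.transpositionLength = σ.transpositionLength := by
  rw [transpositionLength, transpositionLength, cycleType_inv]

theorem Disjoint.transpositionLength_mul {σ τ : Perm α} (h : Disjoint σ τ) :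
    (σ * τ).transpositionLength = σ.transpositionLength + τ.transpositionLength := by
  simp [transpositionLength, h.cycleType_mul]

theorem IsCycle.transpositionLength {c : Perm α} (hc : IsCycle c) :
    c.transpositionLength = #c.support - 1 := by
  simp [Perm.transpositionLength, hc.cycleType]

theorem IsCycle.transpositionLength_swap_mul {c : Perm α} (hc : IsCycle c) {x : α}
    (hx : c x ≠ x) : (swap x (c x) * c).transpositionLength + 1 = c.transpositionLength := by
  by_cases hcc : c (c x) = x
  · rw [hc.eq_swap_of_apply_apply_eq_self hx hcc, swap_apply_left, swap_mul_self,
      (isCycle_swap hx.symm).transpositionLength, card_support_swap hx.symm]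
    simp
  · have hc' := hc.swap_mul hx hcc
    have hcard : #(swap x (c x) * c).support = #c.support - 1 := by
      rw [support_swap_mul_eq c x hcc, card_sdiff_of_subset (by simpa using hx), card_singleton]
    have := hc'.two_le_card_support
    rw [hc'.transpositionLength, hc.transpositionLength]
    omega

-- Left multiplication by `swap x (f x)` splits `x` off its cycle; the other cycles are untouched.
theorem transpositionLength_swap_mul {f : Perm α} {x : α} (hx : f x ≠ x) :
    (swap x (f x) * f).transpositionLength + 1 = f.transpositionLength := by
  set c := f.cycleOf x
  have hc : c.IsCycle := isCycle_cycleOf f hx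
  have hcx : c x = f x := cycleOf_apply_self f x
  set g := f * c⁻¹
  have hgc : Disjoint g c :=
    disjoint_mul_inv_of_mem_cycleFactorsFinset (cycleOf_mem_cycleFactorsFinset_iff.mpr
      (mem_support.mpr hx))
  have hf : f = c * g := by rw [← hgc.commute.eq]; simp [g]
  have hsplit : swap x (f x) * f = (swap x (c x) * c) * g := by
    rw [← hcx, mul_assoc, ← hf]
  have hdisj : Disjoint (swap x (c x) * c) g :=
    hgc.symm.mono (fun y hy => (mem_support_swap_mul_imp_mem_support_ne hy).1) le_rfl
  rw [hsplit, hdisj.transpositionLength_mul, add_right_comm,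
    hc.transpositionLength_swap_mul (hcx ▸ hx), hf, hgc.symm.transpositionLength_mul]

theorem transpositionLength_mul_swap {σ : Perm α} {i k : α} (hk : σ k = k) (hik : i ≠ k) :
    (σ * swap i k).transpositionLength = σ.transpositionLength + 1 := by
  have hτk : (σ * swap i k)⁻¹ k = i := by
    rw [mul_inv_rev, swap_inv, mul_apply, inv_eq_iff_eq.mpr hk.symm, swap_apply_right]
  have hσinv : swap k ((σ * swap i k)⁻¹ k) * (σ * swap i k)⁻¹ = σ⁻¹ := by
    rw [hτk, mul_inv_rev, swap_inv, ← mul_assoc, swap_comm, swap_mul_self, one_mul]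
  have := transpositionLength_swap_mul (f := (σ * swap i k)⁻¹) (hτk ▸ hik)
  rwa [hσinv, transpositionLength_inv, transpositionLength_inv, eq_comm] at this

theorem transpositionLength_add_card_cycleType (σ : Perm α) :
    σ.transpositionLength + Multiset.card σ.cycleType = #σ.support := by
  rw [← sum_cycleType]
  exact Multiset.sum_map_sub_one_add_card fun n hn => one_le_two.trans (two_le_of_mem_cycleType hn)

theorem card_sub_card_parts_partition (σ : Perm α) :
    Fintype.card α - Multiset.card σ.partition.parts = σ.transpositionLength := by
  have := σ.transpositionLength_add_card_cycleType
  have := card_le_univ σ.support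
  rw [parts_partition, Multiset.card_add, Multiset.card_replicate]
  omega

theorem support_subset_iff_forall_notMem {σ : Perm α} {s : Finset α} :
    σ.support ⊆ s ↔ ∀ x ∉ s, σ x = x := by
  simp [Finset.subset_iff, not_imp_comm]

theorem sum_sum_mul_swap_eq_sum_apply_ne {M : Type*} [AddCommMonoid M] (F : Perm α → M)
    {s : Finset α} {m : α} (hm : m ∉ s) :
    ∑ σ ∈ univ.filter (fun σ : Perm α => σ.support ⊆ s), ∑ i ∈ s, F (σ * swap i m) =
      ∑ τ ∈ univ.filter (fun τ : Perm α => τ.support ⊆ insert m s ∧ τ m ≠ m), F τ := by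
  rw [← sum_product']
  refine sum_bij' (fun p _ => p.1 * swap p.2 m) (fun τ _ => (τ * swap (τ⁻¹ m) m, τ⁻¹ m))
    ?_ ?_ ?_ ?_ fun _ _ => rfl
  all_goals simp only [mem_product, mem_filter, mem_univ, true_and,
      support_subset_iff_forall_notMem]
  · rintro ⟨σ, i⟩ ⟨hσ, hi⟩
    have hσm := hσ m hm
    grind [mul_apply, swap_apply_of_ne_of_ne, σ.injective.eq_iff]
  · intro τ h
    have : τ (τ⁻¹ m) = m := τ.apply_symm_apply m
    grind [mul_apply]
  · rintro ⟨σ, i⟩ ⟨hσ, -⟩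
    have hσm : σ⁻¹ m = m := inv_eq_iff_eq.mpr (hσ m hm).symm
    have hinv : (σ * swap i m)⁻¹ m = i := by
      rw [mul_inv_rev, swap_inv, mul_apply, hσm, swap_apply_right]
    exact Prod.ext (by simp only [hinv, mul_assoc, swap_mul_self, mul_one]) hinv
  · intro τ _
    simp [mul_assoc]

end Equiv.Perm

open Equiv Equiv.Perm

section LengthWeightedSum

variable {α : Type*} [DecidableEq α] [Fintype α] {R : Type*} [CommSemiring R]

variable (R) in
noncomputable def lengthWeightedSum (ξ : R) (s : Finset α) :
    MonoidAlgebra R (Perm α) :=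
  ∑ σ ∈ univ.filter (fun σ : Perm α => σ.support ⊆ s),
    ξ ^ σ.transpositionLength • MonoidAlgebra.of R (Perm α) σ

theorem lengthWeightedSum_mul_one_add_smul_sum_swap (ξ : R) {s : Finset α} {m : α} (hm : m ∉ s) :
    lengthWeightedSum R ξ s * (1 + ξ • ∑ i ∈ s, MonoidAlgebra.of R (Perm α) (swap i m)) =
      lengthWeightedSum R ξ (insert m s) := by
  have hfix : univ.filter (fun τ : Perm α => τ.support ⊆ insert m s ∧ τ m = m) =
      univ.filter (fun σ : Perm α => σ.support ⊆ s) := by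
    ext τ
    simp only [mem_filter, mem_univ, true_and, support_subset_iff_forall_notMem, mem_insert]
    grind
  have hmove : lengthWeightedSum R ξ s * (ξ • ∑ i ∈ s, MonoidAlgebra.of R (Perm α) (swap i m)) =
      ∑ τ ∈ univ.filter (fun τ : Perm α => τ.support ⊆ insert m s ∧ τ m ≠ m),
        ξ ^ τ.transpositionLength • MonoidAlgebra.of R (Perm α) τ := by
    rw [← sum_sum_mul_swap_eq_sum_apply_ne _ hm, lengthWeightedSum, sum_mul]
    refine sum_congr rfl fun σ hσ => ?_
    rw [mul_smul_comm, mul_sum, smul_sum]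
    refine sum_congr rfl fun i hi => ?_
    have hσm : σ m = m := notMem_support.mp fun h => hm ((mem_filter.mp hσ).2 h)
    rw [transpositionLength_mul_swap hσm (ne_of_mem_of_not_mem hi hm), smul_mul_assoc,
      ← map_mul, pow_succ, mul_smul, smul_comm]
  rw [mul_add, mul_one, hmove, lengthWeightedSum, lengthWeightedSum, ← hfix,
    ← filter_filter, ← filter_filter, sum_filter_add_sum_filter_not]

theorem lengthWeightedSum_univ (ξ : R) :
    lengthWeightedSum R ξ (univ : Finset α) =
      ∑ σ : Perm α, ξ ^ σ.transpositionLength • MonoidAlgebra.of R (Perm α) σ := by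
  simp [lengthWeightedSum]

theorem lengthWeightedSum_empty (ξ : R) : lengthWeightedSum R ξ (∅ : Finset α) = 1 := by
  have h : univ.filter (fun σ : Perm α => σ.support ⊆ ∅) = {1} := by
    ext σ
    simp
  rw [lengthWeightedSum, h, sum_singleton, transpositionLength_one, pow_zero, one_smul, map_one]

end LengthWeightedSum

def Nat.Partition.cast {m n : ℕ} (h : m = n) (p : m.Partition) : n.Partition :=
  ⟨p.parts, p.parts_pos, h ▸ p.parts_sum⟩

@[simp]
theorem Nat.Partition.parts_cast {m n : ℕ} (h : m = n) (p : m.Partition) :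
    (p.cast h).parts = p.parts :=
  rfl

theorem prod_take_one_add_smul_jucysMurphy (d : ℕ) (ξ : ℂ) {k : ℕ} (hk : k ≤ d) :
    (((List.finRange d).map fun m => 1 + ξ • jucysMurphy d m).take k).prod =
      lengthWeightedSum ℂ ξ (univ.filter fun j : Fin d => (j : ℕ) < k) := by
  induction k with
  | zero => simp [lengthWeightedSum_empty]
  | succ k ih =>
    have hm : (⟨k, hk⟩ : Fin d) ∉ univ.filter fun j : Fin d => (j : ℕ) < k := by simp
    have hlt : univ.filter (· < (⟨k, hk⟩ : Fin d)) = univ.filter fun j : Fin d => (j : ℕ) < k := by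
      simp [Fin.lt_def]
    have hinsert : insert ⟨k, hk⟩ (univ.filter fun j : Fin d => (j : ℕ) < k) =
        univ.filter fun j : Fin d => (j : ℕ) < k + 1 := by
      ext j
      simp only [mem_insert, Fin.ext_iff, mem_filter, mem_univ, true_and]
      omega
    rw [List.prod_take_succ _ _ (by simpa using hk), ih (by omega), List.getElem_map,
      List.getElem_finRange, Fin.cast_mk, jucysMurphy, hlt,
      lengthWeightedSum_mul_one_add_smul_sum_swap ξ hm, hinsert]

theorem sum_smul_classSum (d : ℕ) (ξ : ℂ) :
    ∑ ν : Nat.Partition d, ξ ^ (d - ν.parts.card) • classSum d ν =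
      ∑ σ : Perm (Fin d), ξ ^ σ.transpositionLength • MonoidAlgebra.of ℂ (Perm (Fin d)) σ := by
  rw [← sum_fiberwise univ (fun σ : Perm (Fin d) => σ.partition.cast (Fintype.card_fin d))]
  refine sum_congr rfl fun ν _ => ?_
  rw [classSum, smul_sum]
  refine sum_congr (filter_congr fun σ _ => ?_) fun σ hσ => ?_
  · rw [Nat.Partition.ext_iff, Nat.Partition.parts_cast]
  · obtain rfl := (mem_filter.mp hσ).2
    simpa using congrArg (ξ ^ · • MonoidAlgebra.of ℂ _ σ) (card_sub_card_parts_partition σ)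

/-- `(1 + ξJ_2)(1 + ξJ_3)⋯(1 + ξJ_d) = ∑_{ν ⊢ d} ξ^{d - ℓ(ν)} C_ν` in `ℂ[S_d]`.
(The factor corresponding to the first point is `1 + ξ·0 = 1`.) -/
theorem jucysMurphy_product_eq_sum_classSums (d : ℕ) (ξ : ℂ) :
    (((List.finRange d).map
        (fun m => (1 : MonoidAlgebra ℂ (Equiv.Perm (Fin d))) + ξ • jucysMurphy d m)).prod)
      = ∑ ν : Nat.Partition d, ξ ^ (d - ν.parts.card) • classSum d ν := by
  rw [← List.take_length (l := List.map _ _), List.length_map, List.length_finRange,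
    prod_take_one_add_smul_jucysMurphy d ξ le_rfl, sum_smul_classSum,
    filter_true_of_mem fun j _ => j.isLt, lengthWeightedSum_univ]
end

section
/- The Narayana numbers N_{ℓ,s} := (1/ℓ)·C(ℓ,s)·C(ℓ,s-1) satisfy ∑_{s=1}^{ℓ} N_{ℓ,s} c^s = lim_{N→∞} A_ℓ(N, cN)/N^{ℓ+1}; concretely, the leading coefficient (in total degree ℓ+1) of the polynomial A_ℓ(N, M) := (1/ℓ) ∑_{j=0}^{ℓ-1} (-1)^j (N-j)_ℓ (M-j)_ℓ / (j!(ℓ-1-j)!) after substituting M = cN is ∑_{s=1}^{ℓ} N_{ℓ,s} c^s, i.e., the coefficient of N^{ℓ+1} in A_ℓ(N,cN) (viewed as a polynomial in N with coefficients in ℚ[c]) equals ∑_{s=1}^{ℓ} (1/ℓ) C(ℓ,s) C(ℓ,s-1) c^s. -/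
/-!
Write `(N - j)_ℓ = ∑_a q_a(j) N^a`. By Taylor expansion `q_a(j)` is the value at `-j` of the
`a`-th Hasse derivative of the Pochhammer polynomial `(x)_ℓ`, a polynomial in `j` of degree
`ℓ - a` with leading coefficient `(-1)^(ℓ-a) C(ℓ,a)`. Hence the coefficient of `N^(ℓ+1)` in
`A_ℓ(N, cN)` is `∑_{a+b=ℓ+1} c^b (1/ℓ) ∑_j w_j q_a(j) q_b(j)`. The weights
`w_j = (-1)^j / (j! (ℓ-1-j)!)` turn the inner sum into an `(ℓ-1)`-st forward difference divided
by `(ℓ-1)!`, which only sees the top coefficient of the degree `ℓ - 1` polynomial `q_a q_b`,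
namely `(-1)^(ℓ-1) C(ℓ,a) C(ℓ,b)`; the two signs cancel.
-/

open Finset Polynomial

/-- `A_ℓ(N, cN)` as a polynomial in `N` with coefficients in `ℚ[c]`
(outer variable `X` is `N`, inner variable `Polynomial.X : ℚ[X]` is `c`),
for `ℓ ≥ 1`:
`A_ℓ(N,M) = (1/ℓ) ∑_{j=0}^{ℓ-1} (-1)^j (N-j)_ℓ (M-j)_ℓ / (j!(ℓ-1-j)!)` with `M = cN`. -/
noncomputable def APoly (ℓ : ℕ) : Polynomial (Polynomial ℚ) :=
  C (C ((ℓ : ℚ)⁻¹)) * ∑ j ∈ range ℓ,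
    C (C ((-1 : ℚ) ^ j / ((j.factorial : ℚ) * ((ℓ - 1 - j).factorial : ℚ)))) *
      (ascPochhammer (Polynomial (Polynomial ℚ)) ℓ).eval (X - C (C (j : ℚ))) *
      (ascPochhammer (Polynomial (Polynomial ℚ)) ℓ).eval
        (C (Polynomial.X : Polynomial ℚ) * X - C (C (j : ℚ)))

open fwdDiff
open scoped Nat

namespace Polynomial

section CommRing

variable {R : Type*} [CommRing R]

theorem fwdDiff_iter_eval_of_natDegree_le {P : R[X]} {n : ℕ} (hP : P.natDegree ≤ n) :
    (Δ_[1])^[n] P.eval = fun _ ↦ n ! * P.coeff n := by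
  rcases hP.eq_or_lt with rfl | h
  · rw [P.fwdDiff_iter_degree_eq_factorial, leadingCoeff]
    ext
    simp [mul_comm]
  · rw [fwdDiff_iter_eq_zero_of_degree_lt h, coeff_eq_zero_of_natDegree_lt h, mul_zero]
    rfl

theorem sum_range_neg_one_pow_mul_choose_mul_eval {P : R[X]} {n : ℕ} (hP : P.natDegree ≤ n) :
    ∑ k ∈ range (n + 1), (-1) ^ (n - k) * n.choose k * P.eval (k : R) = n ! * P.coeff n := by
  simpa [fwdDiff_iter_eq_sum_shift] using congrFun (fwdDiff_iter_eval_of_natDegree_le hP) 0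

theorem natDegree_hasseDeriv_comp_neg_X_le (p : R[X]) (k : ℕ) :
    ((hasseDeriv k p).comp (-X)).natDegree ≤ p.natDegree - k :=
  calc _ ≤ (hasseDeriv k p).natDegree * (-X : R[X]).natDegree := natDegree_comp_le
    _ ≤ (hasseDeriv k p).natDegree := by
        rw [natDegree_neg]
        exact mul_le_of_le_one_right (Nat.zero_le _) natDegree_X_le
    _ ≤ p.natDegree - k := natDegree_hasseDeriv_le p k

theorem coeff_hasseDeriv_comp_neg_X (p : R[X]) (k m : ℕ) :
    ((hasseDeriv k p).comp (-X)).coeff m = (-1) ^ m * ((m + k).choose k * p.coeff (m + k)) := by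
  rw [show (-X : R[X]) = C (-1) * X by simp, comp_C_mul_X_coeff, hasseDeriv_coeff, mul_comm]

theorem coeff_taylor_neg (p : R[X]) (r : R) (k : ℕ) :
    (taylor (-r) p).coeff k = ((hasseDeriv k p).comp (-X)).eval r := by
  rw [taylor_coeff, eval_comp, eval_neg, eval_X]

end CommRing

section Field

variable {K : Type*} [Field K] [CharZero K]

theorem sum_range_neg_one_pow_div_factorial_mul_eval {f : K[X]} {n : ℕ}
    (hf : f.natDegree ≤ n) :
    ∑ j ∈ range (n + 1), (-1) ^ j / (j ! * (n - j)! : K) * f.eval (j : K) =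
      (-1) ^ n * f.coeff n := by
  have hn : (n ! : K) ≠ 0 := mod_cast n.factorial_ne_zero
  calc _ = (-1) ^ n / n ! *
        ∑ k ∈ range (n + 1), (-1) ^ (n - k) * n.choose k * f.eval (k : K) := by
        rw [mul_sum]
        refine sum_congr rfl fun j hj ↦ ?_
        have hj : j ≤ n := Nat.lt_succ_iff.mp (mem_range.mp hj)
        have hsign : (-1 : K) ^ n = (-1) ^ j * (-1) ^ (n - j) := by
          rw [← pow_add, Nat.add_sub_cancel' hj]
        rw [Nat.cast_choose K hj, hsign]
        field_simp
        rw [← pow_mul, pow_mul', neg_one_sq, one_pow, mul_one]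
    _ = _ := by
        rw [sum_range_neg_one_pow_mul_choose_mul_eval hf]
        field_simp

theorem sum_range_neg_one_pow_div_factorial_mul_coeff_taylor_mul (p : K[X]) {ℓ a b : ℕ}
    (hp : p.natDegree ≤ ℓ) (hab : a + b = ℓ + 1) :
    ∑ j ∈ range ℓ, (-1) ^ j / (j ! * (ℓ - 1 - j)! : K) *
        ((taylor (-(j : K)) p).coeff a * (taylor (-(j : K)) p).coeff b) =
      ℓ.choose a * ℓ.choose b * p.coeff ℓ ^ 2 := by
  have htop : ∀ r : K, (taylor r p).coeff (ℓ + 1) = 0 := fun r ↦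
    coeff_eq_zero_of_natDegree_lt (by rw [natDegree_taylor]; omega)
  by_cases hdeg : a = 0 ∨ b = 0
  · obtain ⟨rfl, rfl⟩ | ⟨rfl, rfl⟩ : a = 0 ∧ b = ℓ + 1 ∨ a = ℓ + 1 ∧ b = 0 := by omega
    all_goals simp [htop]
  obtain ⟨n, rfl⟩ : ∃ n, ℓ = n + 1 := ⟨ℓ - 1, by omega⟩
  set u : ℕ → K[X] := fun k ↦ (hasseDeriv k p).comp (-X)
  have hdeg_u : ∀ k, (u k).natDegree ≤ n + 1 - k := fun k ↦
    (natDegree_hasseDeriv_comp_neg_X_le p k).trans (Nat.sub_le_sub_right hp k)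
  have hsplit : (n + 1 - a) + (n + 1 - b) = n := by omega
  have hdeg_prod : (u a * u b).natDegree ≤ n :=
    natDegree_mul_le.trans (hsplit ▸ add_le_add (hdeg_u a) (hdeg_u b))
  have hcoeff_prod : (u a * u b).coeff n =
      (-1) ^ n * ((n + 1).choose a * (n + 1).choose b * p.coeff (n + 1) ^ 2) := by
    have h := coeff_mul_add_eq_of_natDegree_le (hdeg_u a) (hdeg_u b)
    rw [hsplit] at h
    rw [h, coeff_hasseDeriv_comp_neg_X, coeff_hasseDeriv_comp_neg_X,
      Nat.sub_add_cancel (by omega : a ≤ n + 1), Nat.sub_add_cancel (by omega : b ≤ n + 1)]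
    have hsign : (-1 : K) ^ (n + 1 - a) * (-1) ^ (n + 1 - b) = (-1) ^ n := by
      rw [← pow_add, hsplit]
    linear_combination ((n + 1).choose a * (n + 1).choose b * p.coeff (n + 1) ^ 2 : K) * hsign
  simp_rw [coeff_taylor_neg, ← eval_mul, Nat.add_sub_cancel]
  rw [sum_range_neg_one_pow_div_factorial_mul_eval hdeg_prod, hcoeff_prod, ← mul_assoc,
    ← pow_add, ← two_mul, pow_mul, neg_one_sq, one_pow, one_mul]

end Field

theorem coeff_map_C_mul_comp_C_X_mul_X {R : Type*} [CommSemiring R] (q : R[X]) (n : ℕ) :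
    (q.map C * (q.map C).comp (C X * X)).coeff n =
      ∑ x ∈ antidiagonal n, C (q.coeff x.1 * q.coeff x.2) * X ^ x.2 := by
  rw [coeff_mul]
  refine sum_congr rfl fun x _ ↦ ?_
  rw [comp_C_mul_X_coeff, coeff_map, coeff_map, map_mul]
  ring

end Polynomial

theorem ascPochhammer_eval_apply {A B : Type*} [CommSemiring A] [CommSemiring B] (f : A →+* B)
    (n : ℕ) (x : A) : (ascPochhammer B n).eval (f x) = f ((ascPochhammer A n).eval x) := by
  rw [← ascPochhammer_map f, eval_map_apply]

theorem ascPochhammer_eval_X_sub_C {R : Type*} [CommRing R] (n : ℕ) (r : R) :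
    (ascPochhammer R[X] n).eval (X - C r) = taylor (-r) (ascPochhammer R n) := by
  rw [taylor_apply, ← ascPochhammer_map C, eval_map, C_neg, ← sub_eq_add_neg]
  rfl

theorem coeff_ascPochhammer_eval_mul_eval {R : Type*} [CommRing R] (ℓ n : ℕ) (r : R) :
    ((ascPochhammer R[X][X] ℓ).eval (X - C (C r)) *
        (ascPochhammer R[X][X] ℓ).eval (C X * X - C (C r))).coeff n =
      ∑ x ∈ antidiagonal n, C ((taylor (-r) (ascPochhammer R ℓ)).coeff x.1 *
        (taylor (-r) (ascPochhammer R ℓ)).coeff x.2) * X ^ x.2 := by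
  have h₁ : X - C (C r) = mapRingHom C (X - C r) := by simp
  have h₂ : C X * X - C (C r) = compRingHom (C X * X) (mapRingHom C (X - C r)) := by simp
  rw [h₁, h₂, ascPochhammer_eval_apply, ascPochhammer_eval_apply, ascPochhammer_eval_apply,
    ascPochhammer_eval_X_sub_C]
  exact coeff_map_C_mul_comp_C_X_mul_X _ _

theorem Finset.Nat.sum_antidiagonal_succ_eq_sum_Icc {M : Type*} [AddCommMonoid M] (n : ℕ)
    (f : ℕ → ℕ → M) (h₀ : f (n + 1) 0 = 0) (h₁ : f 0 (n + 1) = 0) :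
    ∑ x ∈ antidiagonal (n + 1), f x.1 x.2 = ∑ s ∈ Icc 1 n, f (n + 1 - s) s := by
  rw [← Nat.sum_antidiagonal_swap, Nat.sum_antidiagonal_eq_sum_range_succ_mk, sum_range_succ,
    sum_range_succ', ← Ico_add_one_right_eq_Icc, sum_Ico_eq_sum_range]
  simp [h₀, h₁, add_comm]

theorem APoly_leading_coeff_general (ℓ : ℕ) :
    (APoly ℓ).coeff (ℓ + 1)
      = ∑ s ∈ Finset.Icc 1 ℓ,
          C (((ℓ.choose s : ℚ) * (ℓ.choose (s - 1) : ℚ)) / (ℓ : ℚ)) * X ^ s := by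
  set p := ascPochhammer ℚ ℓ
  have hp : p.natDegree = ℓ := ascPochhammer_natDegree ℚ ℓ
  have hp_coeff : p.coeff ℓ = 1 := hp ▸ (monic_ascPochhammer ℚ ℓ).coeff_natDegree
  calc (APoly ℓ).coeff (ℓ + 1)
      = ∑ x ∈ antidiagonal (ℓ + 1), C ((ℓ : ℚ)⁻¹ *
          ∑ j ∈ range ℓ, (-1) ^ j / (j ! * (ℓ - 1 - j)! : ℚ) *
            ((taylor (-(j : ℚ)) p).coeff x.1 * (taylor (-(j : ℚ)) p).coeff x.2)) * X ^ x.2 := by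
        simp only [APoly, coeff_C_mul, finsetSum_coeff, mul_assoc,
          coeff_ascPochhammer_eval_mul_eval, mul_sum, map_mul, map_sum, sum_mul]
        exact sum_comm
    _ = ∑ x ∈ antidiagonal (ℓ + 1), C ((ℓ.choose x.1 * ℓ.choose x.2 : ℚ) / ℓ) * X ^ x.2 := by
        refine sum_congr rfl fun x hx ↦ ?_
        rw [sum_range_neg_one_pow_div_factorial_mul_coeff_taylor_mul p hp.le
          (mem_antidiagonal.mp hx), hp_coeff, one_pow, mul_one, inv_mul_eq_div]
    _ = _ := by
        rw [Nat.sum_antidiagonal_succ_eq_sum_Icc ℓ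
          (fun a b ↦ C ((ℓ.choose a * ℓ.choose b : ℚ) / ℓ) * X ^ b) (by simp) (by simp)]
        refine sum_congr rfl fun s hs ↦ ?_
        rw [mem_Icc] at hs
        rw [mul_comm (ℓ.choose (ℓ + 1 - s) : ℚ),
          Nat.choose_symm_of_eq_add (by omega : ℓ = (ℓ + 1 - s) + (s - 1))]

/-- The coefficient of `N^{ℓ+1}` in `A_ℓ(N,cN)` is `∑_{s=1}^ℓ (1/ℓ) C(ℓ,s) C(ℓ,s-1) c^s`,
the generating polynomial of the Narayana numbers. -/
theorem APoly_leading_coeff (ℓ : ℕ) (hℓ : 1 ≤ ℓ) :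
    (APoly ℓ).coeff (ℓ + 1)
      = ∑ s ∈ Finset.Icc 1 ℓ,
          C (((ℓ.choose s : ℚ) * (ℓ.choose (s - 1) : ℚ)) / (ℓ : ℚ)) * X ^ s :=
  APoly_leading_coeff_general ℓ
end

section
/- The Barnes G-function satisfies the duplication-type formula G(2N+1) = 2^{N(2N-1)} π^{-N-1/2} G(1/2)^{-2} · G(N+1/2) · G(N+1)² · G(N+3/2) for all positive integers N. -/
/-!
Both `s ↦ G (2s)` and `s ↦ 2^((2s-1)(s-1)) π^(-s) G(s) G(s+1/2)² G(s+1)` are multiplied by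
`Γ(2s) Γ(2s+1)` when `s` increases by one; for the second function this is Legendre's
duplication formula applied at `s` and at `s + 1/2`. Their ratio is therefore constant along
`1/2 + ℕ`, and at `s = 1/2` it equals `G(1/2)⁻²` because `G(3/2) = √π G(1/2)`.
-/

open Real

theorem Real.Gamma_mul_Gamma_add_half_sq_mul_Gamma_add_one (s : ℝ) :
    Gamma s * Gamma (s + 1 / 2) ^ 2 * Gamma (s + 1)
      = Gamma (2 * s) * Gamma (2 * s + 1) * 2 ^ (1 - 4 * s) * π := by
  have h₁ := Gamma_mul_Gamma_add_half s
  have h₂ := Gamma_mul_Gamma_add_half (s + 1 / 2)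
  rw [add_assoc, add_halves, mul_add, mul_one_div_cancel two_ne_zero,
    show 1 - (2 * s + 1) = -(2 * s) by ring] at h₂
  have hpow : (2 : ℝ) ^ (1 - 4 * s) = 2 ^ (1 - 2 * s) * 2 ^ (-(2 * s)) := by
    rw [← rpow_add two_pos]; ring_nf
  calc Gamma s * Gamma (s + 1 / 2) ^ 2 * Gamma (s + 1)
      = (Gamma s * Gamma (s + 1 / 2)) * (Gamma (s + 1 / 2) * Gamma (s + 1)) := by ring
    _ = _ := by
      rw [h₁, h₂, hpow]
      linear_combination Gamma (2 * s) * Gamma (2 * s + 1) * 2 ^ (1 - 2 * s) * 2 ^ (-(2 * s))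
        * mul_self_sqrt pi_pos.le

theorem mul_eq_mul_of_add_one_eq_mul {M : Type*} [CommMonoid M] {a b r : ℝ → M} {s : ℝ}
    (hs : 0 < s)
    (ha : ∀ t, 0 < t → a (t + 1) = r t * a t) (hb : ∀ t, 0 < t → b (t + 1) = r t * b t)
    (N : ℕ) : a (N + s) * b s = b (N + s) * a s := by
  induction N with
  | zero => simp [mul_comm]
  | succ n ih =>
    have hpos : 0 < n + s := by positivity
    rw [Nat.cast_succ, add_right_comm, ha _ hpos, hb _ hpos, mul_assoc, ih, mul_assoc]

noncomputable def barnesDuplicationProduct (G : ℝ → ℝ) (s : ℝ) : ℝ :=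
  2 ^ ((2 * s - 1) * (s - 1)) * π ^ (-s) * (G s * G (s + 1 / 2) ^ 2 * G (s + 1))

section Recurrence

variable {G : ℝ → ℝ} (hGrec : ∀ z : ℝ, 0 < z → G (z + 1) = Gamma z * G z)
include hGrec

theorem G_two_mul_add_one {s : ℝ} (hs : 0 < s) :
    G (2 * (s + 1)) = Gamma (2 * s) * Gamma (2 * s + 1) * G (2 * s) := by
  rw [show 2 * (s + 1) = 2 * s + 1 + 1 by ring, hGrec _ (by positivity), hGrec _ (by positivity)]
  ring

theorem barnesDuplicationProduct_add_one {s : ℝ} (hs : 0 < s) :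
    barnesDuplicationProduct G (s + 1)
      = Gamma (2 * s) * Gamma (2 * s + 1) * barnesDuplicationProduct G s := by
  have hG : G (s + 1) * G (s + 1 + 1 / 2) ^ 2 * G (s + 1 + 1)
      = Gamma s * Gamma (s + 1 / 2) ^ 2 * Gamma (s + 1)
        * (G s * G (s + 1 / 2) ^ 2 * G (s + 1)) := by
    rw [add_right_comm s 1, hGrec (s + 1 / 2) (by positivity), hGrec (s + 1) (by positivity),
      hGrec s hs]
    ring
  have h₂ : (2 : ℝ) ^ ((2 * (s + 1) - 1) * (s + 1 - 1))
      = 2 ^ (4 * s - 1) * 2 ^ ((2 * s - 1) * (s - 1)) := by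
    rw [← rpow_add two_pos]; ring_nf
  have hπ : π ^ (-(s + 1)) = π⁻¹ * π ^ (-s) := by
    rw [neg_add, rpow_add pi_pos, rpow_neg_one, mul_comm]
  have hcancel : (2 : ℝ) ^ (4 * s - 1) * π⁻¹ * (2 ^ (1 - 4 * s) * π) = 1 := by
    rw [mul_mul_mul_comm, ← rpow_add two_pos, inv_mul_cancel₀ pi_ne_zero]; norm_num
  unfold barnesDuplicationProduct
  rw [hG, Real.Gamma_mul_Gamma_add_half_sq_mul_Gamma_add_one, h₂, hπ]
  linear_combination Gamma (2 * s) * Gamma (2 * s + 1) * 2 ^ ((2 * s - 1) * (s - 1)) * π ^ (-s)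
    * (G s * G (s + 1 / 2) ^ 2 * G (s + 1)) * hcancel

theorem barnesDuplicationProduct_one_half (hG1 : G 1 = 1) :
    barnesDuplicationProduct G (1 / 2) = G (1 / 2) ^ 2 := by
  have hG32 : G (1 / 2 + 1) = √π * G (1 / 2) := by rw [hGrec _ one_half_pos, Gamma_one_half_eq]
  have hπ : π ^ (-(1 / 2 : ℝ)) * √π = 1 := by
    rw [sqrt_eq_rpow, ← rpow_add pi_pos]; norm_num
  unfold barnesDuplicationProduct
  rw [add_halves, hG1, hG32]
  linear_combination G (1 / 2) ^ 2 * hπ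

end Recurrence

theorem Nat.cast_mul_two_mul_sub_one (N : ℕ) :
    ((N * (2 * N - 1) : ℕ) : ℝ) = N * (2 * N - 1) := by
  rcases Nat.eq_zero_or_pos N with rfl | hN
  · simp
  · rw [Nat.cast_mul, Nat.cast_sub (by omega)]
    push_cast
    ring

theorem barnesG_duplication_general (G : ℝ → ℝ)
    (hG1 : G 1 = 1)
    (hGrec : ∀ z : ℝ, 0 < z → G (z + 1) = Real.Gamma z * G z)
    (hGhalf : G (1 / 2) ≠ 0)
    (N : ℕ) :
    G (2 * N + 1)
      = 2 ^ (N * (2 * N - 1)) * Real.pi ^ (-(N : ℝ) - 1 / 2) * (G (1 / 2))⁻¹ ^ 2 *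
          G ((N : ℝ) + 1 / 2) * (G ((N : ℝ) + 1)) ^ 2 * G ((N : ℝ) + 3 / 2) := by
  have key := mul_eq_mul_of_add_one_eq_mul (a := fun s ↦ G (2 * s)) one_half_pos
    (fun _ ↦ G_two_mul_add_one hGrec) (fun _ ↦ barnesDuplicationProduct_add_one hGrec) N
  rw [barnesDuplicationProduct_one_half hGrec hG1, mul_one_div_cancel two_ne_zero, hG1, mul_one,
    ← eq_div_iff (pow_ne_zero 2 hGhalf), barnesDuplicationProduct,
    show (2 : ℝ) * (N + 1 / 2) = 2 * N + 1 by ring, add_assoc, add_halves,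
    show (N : ℝ) + 1 / 2 + 1 = N + 3 / 2 by ring] at key
  rw [key, ← rpow_natCast (2 : ℝ) (N * (2 * N - 1)), Nat.cast_mul_two_mul_sub_one, neg_sub_left,
    add_comm (1 / 2 : ℝ)]
  ring_nf

/-- Duplication-type formula for the Barnes G-function:
`G(2N+1) = 2^{N(2N-1)} π^{-N-1/2} G(1/2)^{-2} G(N+1/2) G(N+1)² G(N+3/2)`,
for any function `G` with `G(1) = 1` and `G(z+1) = Γ(z)G(z)` for `z > 0`
(and `G(1/2) ≠ 0`, as it is for the Barnes G-function). -/
theorem barnesG_duplication (G : ℝ → ℝ)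
    (hG1 : G 1 = 1)
    (hGrec : ∀ z : ℝ, 0 < z → G (z + 1) = Real.Gamma z * G z)
    (hGhalf : G (1 / 2) ≠ 0)
    (N : ℕ) (hN : 1 ≤ N) :
    G (2 * N + 1)
      = 2 ^ (N * (2 * N - 1)) * Real.pi ^ (-(N : ℝ) - 1 / 2) * (G (1 / 2))⁻¹ ^ 2 *
          G ((N : ℝ) + 1 / 2) * (G ((N : ℝ) + 1)) ^ 2 * G ((N : ℝ) + 3 / 2) :=
  barnesG_duplication_general G hG1 hGrec hGhalf N
end
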